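/- Define, for real t with t ≠ ±1, E(t) = [(1−t³)⁶ − t⁸(1−t)⁶]/[(1−t²)(1−t⁴)] − (t⁴/2)·[(1−t)⁶/(1−t²) − (1+t)⁶/(1+t²)] + 64·t¹⁰·(1+t²+t⁴)(1+t⁴)·((t²−1)/(t¹⁰−1))². Then E(t) tends to 784/25 (= 31 + 9/25) as t → 1 with t ≠ 1; i.e. Tendsto (fun t => E(t)) (𝓝[≠] 1) (𝓝 (784/25)). -/
import Mathlib


open Filter Topology

/-- The specialization u = v = t of the stringy E-function of Theorem 1.1. -/
noncomputable def EstDiag (t : ℝ) : ℝ :=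
  ((1 - t ^ 3) ^ 6 - t ^ 8 * (1 - t) ^ 6) / ((1 - t ^ 2) * (1 - t ^ 4))
  - t ^ 4 / 2 * ((1 - t) ^ 6 / (1 - t ^ 2) - (1 + t) ^ 6 / (1 + t ^ 2))
  + 64 * t ^ 10 * (1 + t ^ 2 + t ^ 4) * (1 + t ^ 4)
      * ((t ^ 2 - 1) / (t ^ 10 - 1)) ^ 2

/-- A version of `EstDiag` with the vanishing factors cancelled, continuous at 1. -/
noncomputable def FDiag (t : ℝ) : ℝ :=
  (1 - t) ^ 4 * ((1 + t + t ^ 2) ^ 6 - t ^ 8) / ((1 + t) ^ 2 * (1 + t ^ 2))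
  - t ^ 4 / 2 * ((1 - t) ^ 5 / (1 + t) - (1 + t) ^ 6 / (1 + t ^ 2))
  + 64 * t ^ 10 * (1 + t ^ 2 + t ^ 4) * (1 + t ^ 4)
      * (1 / (1 + t ^ 2 + t ^ 4 + t ^ 6 + t ^ 8)) ^ 2

lemma quint_pos (t : ℝ) : 0 < 1 + t ^ 2 + t ^ 4 + t ^ 6 + t ^ 8 := by positivity

lemma sq_add_one_pos (t : ℝ) : 0 < 1 + t ^ 2 := by positivity

lemma eq_on (t : ℝ) (h1 : t ≠ 1) (h2 : t ≠ -1) : EstDiag t = FDiag t := by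
  have ha : (1 : ℝ) - t ≠ 0 := sub_ne_zero.mpr (by simpa using h1.symm)
  have hb : (1 : ℝ) + t ≠ 0 := by
    intro h; apply h2; linarith
  have hc : (1 : ℝ) + t ^ 2 ≠ 0 := ne_of_gt (sq_add_one_pos t)
  have hd : (1 : ℝ) + t ^ 2 + t ^ 4 + t ^ 6 + t ^ 8 ≠ 0 := ne_of_gt (quint_pos t)
  have h2' : (1 : ℝ) - t ^ 2 ≠ 0 := by
    have : (1 : ℝ) - t ^ 2 = (1 - t) * (1 + t) := by ring
    rw [this]; exact mul_ne_zero ha hb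
  have h4' : (1 : ℝ) - t ^ 4 ≠ 0 := by
    have : (1 : ℝ) - t ^ 4 = (1 - t ^ 2) * (1 + t ^ 2) := by ring
    rw [this]; exact mul_ne_zero h2' hc
  have h10 : t ^ 10 - 1 ≠ 0 := by
    have : t ^ 10 - 1 = -((1 - t ^ 2) * (1 + t ^ 2 + t ^ 4 + t ^ 6 + t ^ 8)) := by ring
    rw [this]; exact neg_ne_zero.mpr (mul_ne_zero h2' hd)
  unfold EstDiag FDiag
  field_simp
  ring

lemma F_cont : ContinuousAt FDiag 1 := by
  have hb : ((1 : ℝ) + 1) ^ 2 * (1 + (1:ℝ) ^ 2) ≠ 0 := by norm_num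
  have hb1 : (1 : ℝ) + 1 ≠ 0 := by norm_num
  have hb2 : (1 : ℝ) + (1:ℝ) ^ 2 ≠ 0 := by norm_num
  have hb3 : (1 : ℝ) + 1 ^ 2 + 1 ^ 4 + 1 ^ 6 + (1:ℝ) ^ 8 ≠ 0 := by norm_num
  unfold FDiag
  fun_prop (disch := norm_num)

/-- The stringy Euler number: E(t) → 784/25 = 31 + 9/25 as t → 1, t ≠ 1. -/
theorem EstDiag_tendsto :
    Tendsto EstDiag (𝓝[≠] (1 : ℝ)) (𝓝 (784 / 25)) := by
  have hF : Tendsto FDiag (𝓝[≠] (1 : ℝ)) (𝓝 (784 / 25)) := by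
    have h := F_cont.continuousWithinAt (s := {(1:ℝ)}ᶜ)
    have hval : FDiag 1 = 784 / 25 := by unfold FDiag; norm_num
    rw [ContinuousWithinAt, hval] at h
    exact h
  apply hF.congr'
  filter_upwards [self_mem_nhdsWithin,
    eventually_nhdsWithin_of_eventually_nhds
      (eventually_ne_nhds (by norm_num : (1:ℝ) ≠ -1))] with t ht ht2
  exact (eq_on t ht ht2).symm
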